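/- arXiv:1601.02245 — 2 statements merged into one kernel-verified Lean document; each statement's English description precedes it below -/
import Mathlib

section
/- For every integer N > 2 and every integer m with 0 ≤ m ≤ N, the stepsize ratio r(N,m) = ((2N−1)/(N+1)²)·m + N/((2N−1)(N+1)) satisfies r(N,m) ≠ 1; consequently, for any stepsize h > 0, the ASPA update h' = r(N,m)·h satisfies h' ≠ h, i.e., the stepsize recurrence has no fixed points. -/
/-!
Clearing denominators, `r(N, m) = 1` says `d² · m = (N + 1)(2N² − 1)` with `d = 2N − 1`.
Rewritten in `d`, `8 (N + 1)(2N² − 1) = d² (2d + 10) + 10d − 6`, so `d² ∣ (N + 1)(2N² − 1)`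
forces `d ∣ 6`, which no odd `d ≥ 5` does.
-/

/-- The ASPA stepsize ratio: with `N` processors, if `m` of them were
successful, the next stepsize is `r(N,m)` times the current one. -/
noncomputable def aspaRatio (N m : ℝ) : ℝ :=
  (2 * N - 1) / (N + 1) ^ 2 * m + N / ((2 * N - 1) * (N + 1))

lemma aspaRatio_eq_one_iff {N m : ℝ} (hN : N + 1 ≠ 0) (hN' : 2 * N - 1 ≠ 0) :
    aspaRatio N m = 1 ↔ (2 * N - 1) ^ 2 * m = (N + 1) * (2 * N ^ 2 - 1) := by
  unfold aspaRatio
  field_simp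
  constructor <;> intro h <;> linear_combination h

lemma not_sq_two_mul_sub_one_dvd {N : ℤ} (hN : 2 < N) :
    ¬ (2 * N - 1) ^ 2 ∣ (N + 1) * (2 * N ^ 2 - 1) := by
  set d := 2 * N - 1 with hd
  intro hdvd
  have hexpand : 8 * ((N + 1) * (2 * N ^ 2 - 1)) = d ^ 2 * (2 * d + 10) + (10 * d - 6) := by
    rw [hd]; ring
  have hrem : d ^ 2 ∣ 10 * d - 6 :=
    (dvd_add_right (dvd_mul_right _ _)).mp (hexpand ▸ hdvd.mul_left 8)
  have hsix : d ∣ 6 := by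
    have := (dvd_pow_self d two_ne_zero).trans hrem
    simpa using (dvd_sub (dvd_mul_left d 10) this)
  have : d ≤ 6 := Int.le_of_dvd (by norm_num) hsix
  obtain rfl : N = 3 := by omega
  norm_num [hd] at hsix

theorem aspa_no_fixed_points_general (N m : ℤ) (hN : 2 < N) :
    aspaRatio N m ≠ 1 ∧ ∀ h : ℝ, 0 < h → aspaRatio N m * h ≠ h := by
  have hN₁ : (N : ℝ) + 1 ≠ 0 := by norm_cast; omega
  have hN₂ : 2 * (N : ℝ) - 1 ≠ 0 := by norm_cast; omega
  have hr : aspaRatio N m ≠ 1 := by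
    intro h
    rw [aspaRatio_eq_one_iff hN₁ hN₂] at h
    exact not_sq_two_mul_sub_one_dvd hN ⟨m, by exact_mod_cast h.symm⟩
  exact ⟨hr, fun h hh => (mul_eq_right₀ hh.ne').not.mpr hr⟩

/-- For every integer `N > 2` and every integer `m` with `0 ≤ m ≤ N`, the
stepsize ratio `r(N,m)` is never `1`; consequently, for any stepsize `h > 0`,
the ASPA update `h' = r(N,m)·h` satisfies `h' ≠ h`: the recurrence has no
fixed points. -/
theorem aspa_no_fixed_points (N m : ℤ) (hN : 2 < N) (hm0 : 0 ≤ m) (hmN : m ≤ N) :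
    aspaRatio N m ≠ 1 ∧ ∀ h : ℝ, 0 < h → aspaRatio N m * h ≠ h :=
  aspa_no_fixed_points_general N m hN
end

section
/- For every integer N ≥ 2, the stepsize ratio when all processors are successful, r(N,N) = N(2N−1)/(N+1)² + N/((2N−1)(N+1)), satisfies 3/4 < r(N,N) < 2. -/
/-!
Both bounds are sign statements for rational functions of `N`: writing `r(x)` for the ratio at a
real `x`, one has `r x - 3/4 = (x - 1)(10x² - 11x - 3) / (4(x + 1)²(2x - 1))` and
`2 - r x = (9x² - 2x - 2) / ((x + 1)²(2x - 1))`, and all factors are positive for `x ≥ 3/2`.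
The lower bound is tight at `x = 1` and fails just above it, where `10x² - 11x - 3 < 0`.
-/

noncomputable def aspaFullRatio (x : ℝ) : ℝ :=
  x * (2 * x - 1) / (x + 1) ^ 2 + x / ((2 * x - 1) * (x + 1))

lemma aspaFullRatio_sub_three_quarters {x : ℝ} (h₁ : 2 * x - 1 ≠ 0) (h₂ : x + 1 ≠ 0) :
    aspaFullRatio x - 3 / 4 =
      (x - 1) * (10 * x ^ 2 - 11 * x - 3) / (4 * (x + 1) ^ 2 * (2 * x - 1)) := by
  have hden : (x + 1) ^ 2 * ((2 * x - 1) * (x + 1)) ≠ 0 := by positivity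
  rw [aspaFullRatio, div_add_div _ _ (pow_ne_zero 2 h₂) (mul_ne_zero h₁ h₂),
    div_sub_div _ _ hden four_ne_zero, div_eq_div_iff (by positivity) (by positivity)]
  ring

lemma two_sub_aspaFullRatio {x : ℝ} (h₁ : 2 * x - 1 ≠ 0) (h₂ : x + 1 ≠ 0) :
    2 - aspaFullRatio x = (9 * x ^ 2 - 2 * x - 2) / ((x + 1) ^ 2 * (2 * x - 1)) := by
  rw [aspaFullRatio, eq_div_iff (by positivity)]
  field_simp
  ring

lemma three_quarters_lt_aspaFullRatio {x : ℝ} (hx : 3 / 2 ≤ x) : 3 / 4 < aspaFullRatio x := by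
  rw [← sub_pos, aspaFullRatio_sub_three_quarters (by linarith) (by linarith)]
  apply div_pos
  · exact mul_pos (by linarith) (by nlinarith)
  · exact mul_pos (by positivity) (by linarith)

lemma aspaFullRatio_lt_two {x : ℝ} (hx : 1 ≤ x) : aspaFullRatio x < 2 := by
  rw [← sub_pos, two_sub_aspaFullRatio (by linarith) (by linarith)]
  apply div_pos
  · nlinarith
  · exact mul_pos (by positivity) (by linarith)

/-- For every integer `N ≥ 2`, the stepsize ratio when all processors are
successful, `r(N,N) = N(2N−1)/(N+1)² + N/((2N−1)(N+1))`, satisfies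
`3/4 < r(N,N) < 2`. -/
theorem aspaRatio_full_bounds (N : ℤ) (hN : 2 ≤ N) :
    3 / 4 < (N : ℝ) * (2 * (N : ℝ) - 1) / ((N : ℝ) + 1) ^ 2 +
      (N : ℝ) / ((2 * (N : ℝ) - 1) * ((N : ℝ) + 1)) ∧
    (N : ℝ) * (2 * (N : ℝ) - 1) / ((N : ℝ) + 1) ^ 2 +
      (N : ℝ) / ((2 * (N : ℝ) - 1) * ((N : ℝ) + 1)) < 2 := by
  have hx : (2 : ℝ) ≤ N := by exact_mod_cast hN
  exact ⟨three_quarters_lt_aspaFullRatio (by linarith), aspaFullRatio_lt_two (by linarith)⟩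
end
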